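/- arXiv:2511.21929 — 2 statements merged into one kernel-verified Lean document; each statement's English description precedes it below -/
import Mathlib

section
/- Let X₁, X₂ be integrable random variables on a common probability space, S = X₁ + X₂, and let 0 < s ≤ 1 and α₁, α₂ ∈ (0,1) with α₁ + α₂ = s. Then R_{[0,s]}(S) ≤ R_{[0,α₁] ∪ [1-s+α₁, 1]}(X₁) + R_{[0,α₂] ∪ [1-s+α₂, 1]}(X₂). -/
/-!
Call a `[0, 1]`-valued random variable `ψ` with `𝔼ψ = β` a randomized event of probability `β`.
For these the Hardy–Littlewood inequalities `∫₀^β q_X ≤ 𝔼[Xψ] ≤ ∫_{1-β}^1 q_X` hold, and the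
lower bound is attained by `ψ = 1{X < q_X(β)} + c · 1{X = q_X(β)}`. Take such optimal events `φᵢ`
for `Xᵢ` at level `αᵢ`, and a randomized event `φ ≥ max φ₁ φ₂` of probability `s = α₁ + α₂`.
As `φ - φ₁` has probability `α₂ = s - α₁` (and symmetrically),

  `∫₀^s q_S ≤ 𝔼[Sφ] = Σᵢ (𝔼[Xᵢφᵢ] + 𝔼[Xᵢ(φ - φᵢ)]) ≤ Σᵢ (∫₀^{αᵢ} q_{Xᵢ} + ∫_{1-s+αᵢ}^1 q_{Xᵢ})`.

Quantile integrals are computed by the quantile transform: under the uniform law on `(0, 1)`,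
the quantile function of `X` has the law of `X`.
-/

open MeasureTheory Set Filter

/-- Left `u`-quantile of a random variable `X` under measure `μ`. -/
noncomputable def leftQuantile {Ω : Type*} [MeasurableSpace Ω] (μ : Measure Ω)
    (X : Ω → ℝ) (u : ℝ) : ℝ :=
  sInf {x : ℝ | u ≤ (μ {ω | X ω ≤ x}).toReal}

/-- Averaged quantile functional `R_I`. -/
noncomputable def avgQuantile {Ω : Type*} [MeasurableSpace Ω] (μ : Measure Ω)
    (X : Ω → ℝ) (I : Set ℝ) : ℝ :=
  (volume I).toReal⁻¹ * ∫ u in I, leftQuantile μ X u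

open Topology ProbabilityTheory

noncomputable def quantile (ν : Measure ℝ) (u : ℝ) : ℝ :=
  sInf {x | u ≤ cdf ν x}

section Quantile

variable {ν : Measure ℝ} {u x : ℝ}

lemma bddBelow_setOf_le_cdf (hu : 0 < u) : BddBelow {x | u ≤ cdf ν x} := by
  obtain ⟨x₀, hx₀⟩ :=
    eventually_atBot.1 ((tendsto_cdf_atBot ν).eventually (eventually_lt_nhds hu))
  exact ⟨x₀, fun x hx => le_of_not_gt fun hlt => (hx₀ x hlt.le).not_ge hx⟩

lemma nonempty_setOf_le_cdf (hu : u < 1) : {x | u ≤ cdf ν x}.Nonempty :=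
  ((tendsto_cdf_atTop ν).eventually (eventually_ge_nhds hu)).exists

lemma le_cdf_quantile (hu : u ∈ Ioo 0 1) : u ≤ cdf ν (quantile ν u) := by
  have hright : Tendsto (cdf ν) (𝓝[>] (quantile ν u)) (𝓝 (cdf ν (quantile ν u))) :=
    ((cdf ν).right_continuous _).mono Ioi_subset_Ici_self
  refine ge_of_tendsto hright (eventually_nhdsWithin_of_forall fun y hy => ?_)
  obtain ⟨z, hz, hzy⟩ := exists_lt_of_csInf_lt (nonempty_setOf_le_cdf hu.2) hy
  exact hz.trans (monotone_cdf ν hzy.le)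

lemma quantile_le_iff (hu : u ∈ Ioo 0 1) : quantile ν u ≤ x ↔ u ≤ cdf ν x :=
  ⟨fun h => (le_cdf_quantile hu).trans (monotone_cdf ν h),
    fun h => csInf_le (bddBelow_setOf_le_cdf hu.1) h⟩

lemma monotoneOn_quantile : MonotoneOn (quantile ν) (Ioo 0 1) := fun _ hu _ hv huv =>
  (quantile_le_iff hu).2 (huv.trans (le_cdf_quantile hv))

lemma aemeasurable_quantile : AEMeasurable (quantile ν) (volume.restrict (Ioo 0 1)) :=
  aemeasurable_restrict_of_monotoneOn measurableSet_Ioo monotoneOn_quantile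

lemma measureReal_Iio_quantile_le [IsProbabilityMeasure ν] (hu : u ∈ Ioo 0 1) :
    ν.real (Iio (quantile ν u)) ≤ u := by
  have hIio := (cdf ν).measure_Iio (tendsto_cdf_atBot ν) (quantile ν u)
  rw [measure_cdf, sub_zero] at hIio
  rw [measureReal_def, hIio, ENNReal.toReal_ofReal']
  refine max_le (le_of_tendsto ((monotone_cdf ν).tendsto_leftLim _)
    (eventually_nhdsWithin_of_forall fun y hy => ?_)) hu.1.le
  exact (not_le.1 fun h => (not_le.2 hy) ((quantile_le_iff hu).2 h)).le

variable [IsProbabilityMeasure ν]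

/-- The quantile transform: under the uniform law on `(0, 1)`, `quantile ν` has law `ν`. -/
lemma map_quantile_restrict_Ioo : (volume.restrict (Ioo 0 1)).map (quantile ν) = ν := by
  have : IsFiniteMeasure (volume.restrict (Ioo (0 : ℝ) 1)) := ⟨by simp⟩
  refine Measure.ext_of_Iic _ _ fun x => ?_
  have hpre : quantile ν ⁻¹' Iic x ∩ Ioo 0 1 = Iic (cdf ν x) ∩ Ioo 0 1 := by
    ext u
    simp only [mem_inter_iff, mem_preimage, mem_Iic, and_congr_left_iff]
    exact fun hu => quantile_le_iff hu
  rw [Measure.map_apply_of_aemeasurable aemeasurable_quantile measurableSet_Iic,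
    Measure.restrict_apply' measurableSet_Ioo, hpre, ← ofReal_cdf, inter_comm,
    measure_congr ((Ioo_ae_eq_Ioc (μ := volume)).inter (ae_eq_refl (Iic (cdf ν x)))),
    Ioc_inter_Iic, min_eq_right (cdf_le_one ν x), Real.volume_Ioc, sub_zero]

lemma integral_comp_quantile {E : Type*} [NormedAddCommGroup E] [NormedSpace ℝ E] {g : ℝ → E}
    (hg : AEStronglyMeasurable g ν) :
    ∫ u in Ioo 0 1, g (quantile ν u) = ∫ x, g x ∂ν := by
  rw [← integral_map aemeasurable_quantile (by rwa [map_quantile_restrict_Ioo]),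
    map_quantile_restrict_Ioo]

lemma integrableOn_quantile (h : Integrable id ν) : IntegrableOn (quantile ν) (Ioo 0 1) := by
  rw [← map_quantile_restrict_Ioo (ν := ν)] at h
  exact (integrable_map_measure aestronglyMeasurable_id aemeasurable_quantile).1 h

lemma setIntegral_Ioo_quantile (h : Integrable id ν) {β : ℝ} (hβ : β ∈ Ioo 0 1) :
    ∫ u in Ioo 0 β, quantile ν u = β * quantile ν β - ∫ x, max (quantile ν β - x) 0 ∂ν := by
  set t := quantile ν β
  have hsub : Ioo 0 β ⊆ Ioo (0 : ℝ) 1 := Ioo_subset_Ioo_right hβ.2.le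
  have hpos : ∫ x, max (t - x) 0 ∂ν = ∫ u in Ioo 0 β, (t - quantile ν u) := by
    rw [← integral_comp_quantile (ν := ν) (by fun_prop), ← inter_eq_right.2 hsub,
      ← setIntegral_indicator measurableSet_Ioo]
    refine setIntegral_congr_fun measurableSet_Ioo fun u hu => ?_
    by_cases huβ : u < β
    · rw [indicator_of_mem (show u ∈ Ioo 0 β from ⟨hu.1, huβ⟩),
        max_eq_left (sub_nonneg.2 (monotoneOn_quantile hu hβ huβ.le))]
    · rw [indicator_of_notMem fun h => huβ h.2,
        max_eq_right (sub_nonpos.2 (monotoneOn_quantile hβ hu (not_lt.1 huβ)))]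
  have hconst : IntegrableOn (fun _ => t) (Ioo 0 β) := integrableOn_const measure_Ioo_lt_top.ne
  rw [hpos, integral_sub hconst ((integrableOn_quantile h).mono_set hsub),
    setIntegral_const, Real.volume_real_Ioo_of_le hβ.1.le, smul_eq_mul]
  ring

end Quantile

lemma aedisjoint_Icc_Icc {a b c d : ℝ} (hbc : b ≤ c) :
    AEDisjoint volume (Icc a b) (Icc c d) :=
  measure_mono_null (t := Icc c b) (fun _ hx => ⟨hx.2.1, hx.1.2⟩)
    (by rw [Real.volume_Icc, ENNReal.ofReal_eq_zero, sub_nonpos]; exact hbc)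

lemma setIntegral_Icc_union_Icc {f : ℝ → ℝ} {a b c d : ℝ} (hbc : b ≤ c)
    (hf : IntegrableOn f (Icc a b ∪ Icc c d)) :
    ∫ u in Icc a b ∪ Icc c d, f u = (∫ u in Icc a b, f u) + ∫ u in Icc c d, f u :=
  setIntegral_union₀ (aedisjoint_Icc_Icc hbc) measurableSet_Icc.nullMeasurableSet
    hf.left_of_union hf.right_of_union

lemma mul_sub_max_le_mul {t x p : ℝ} (h0 : 0 ≤ p) (h1 : p ≤ 1) :
    t * p - max (t - x) 0 ≤ x * p := by
  rcases le_total t x with h | h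
  · rw [max_eq_right (sub_nonpos.2 h)]; nlinarith
  · rw [max_eq_left (sub_nonneg.2 h)]; nlinarith

structure IsRandomizedEvent {Ω : Type*} [MeasurableSpace Ω] (μ : Measure Ω) (ψ : Ω → ℝ)
    (β : ℝ) : Prop where
  aemeasurable : AEMeasurable ψ μ
  nonneg : ∀ ω, 0 ≤ ψ ω
  le_one : ∀ ω, ψ ω ≤ 1
  integral_eq : ∫ ω, ψ ω ∂μ = β

namespace IsRandomizedEvent

variable {Ω : Type*} [MeasurableSpace Ω] {μ : Measure Ω} {φ ψ X : Ω → ℝ} {a b : ℝ}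

lemma integrable_mul (hψ : IsRandomizedEvent μ ψ b) (hX : Integrable X μ) :
    Integrable (fun ω => X ω * ψ ω) μ :=
  hX.mul_bdd hψ.aemeasurable.aestronglyMeasurable
    (ae_of_all _ fun ω => by rw [Real.norm_of_nonneg (hψ.nonneg ω)]; exact hψ.le_one ω)

lemma integrable [IsFiniteMeasure μ] (hψ : IsRandomizedEvent μ ψ b) : Integrable ψ μ := by
  simpa using hψ.integrable_mul (integrable_const 1)

lemma mass_nonneg (hψ : IsRandomizedEvent μ ψ b) : 0 ≤ b :=
  hψ.integral_eq ▸ integral_nonneg hψ.nonneg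

lemma mass_le_one [IsProbabilityMeasure μ] (hψ : IsRandomizedEvent μ ψ b) : b ≤ 1 := by
  simpa [hψ.integral_eq] using integral_mono hψ.integrable (integrable_const 1) hψ.le_one

lemma one [IsProbabilityMeasure μ] : IsRandomizedEvent μ (fun _ => 1) 1 :=
  ⟨aemeasurable_const, fun _ => zero_le_one, fun _ => le_rfl, by simp⟩

lemma sub [IsFiniteMeasure μ] (hφ : IsRandomizedEvent μ φ a) (hψ : IsRandomizedEvent μ ψ b)
    (hle : ∀ ω, ψ ω ≤ φ ω) : IsRandomizedEvent μ (fun ω => φ ω - ψ ω) (a - b) where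
  aemeasurable := hφ.aemeasurable.sub hψ.aemeasurable
  nonneg ω := sub_nonneg.2 (hle ω)
  le_one ω := by linarith [hφ.le_one ω, hψ.nonneg ω]
  integral_eq := by rw [integral_sub hφ.integrable hψ.integrable, hφ.integral_eq, hψ.integral_eq]

lemma one_sub [IsProbabilityMeasure μ] (hψ : IsRandomizedEvent μ ψ b) :
    IsRandomizedEvent μ (fun ω => 1 - ψ ω) (1 - b) :=
  one.sub hψ hψ.le_one

lemma ae_eq_one [IsProbabilityMeasure μ] (hψ : IsRandomizedEvent μ ψ 1) : ψ =ᵐ[μ] 1 := by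
  have h := hψ.one_sub
  have h0 := (integral_eq_zero_iff_of_nonneg h.nonneg h.integrable).1
    (h.integral_eq.trans (sub_self 1))
  filter_upwards [h0] with ω hω
  exact (sub_eq_zero.1 hω).symm

lemma comp {Ω' : Type*} [MeasurableSpace Ω'] {Y : Ω → Ω'} {g : Ω' → ℝ}
    (hg : IsRandomizedEvent (μ.map Y) g b) (hY : AEMeasurable Y μ) :
    IsRandomizedEvent μ (fun ω => g (Y ω)) b where
  aemeasurable := hg.aemeasurable.comp_aemeasurable hY
  nonneg ω := hg.nonneg (Y ω)
  le_one ω := hg.le_one (Y ω)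
  integral_eq := (integral_map hY hg.aemeasurable.aestronglyMeasurable).symm.trans hg.integral_eq

/-- Two randomized events whose masses add up to at most one lie below a common randomized event
of mass `a + b`. -/
lemma exists_ge_ge [IsProbabilityMeasure μ] (hφ : IsRandomizedEvent μ φ a)
    (hψ : IsRandomizedEvent μ ψ b) (hab : a + b ≤ 1) :
    ∃ χ, IsRandomizedEvent μ χ (a + b) ∧ φ ≤ χ ∧ ψ ≤ χ := by
  set m := fun ω => max (φ ω) (ψ ω)
  set e := ∫ ω, m ω ∂μ
  have hm : IsRandomizedEvent μ m e :=
    ⟨hφ.aemeasurable.sup hψ.aemeasurable, fun ω => (hφ.nonneg ω).trans (le_max_left _ _),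
      fun ω => max_le (hφ.le_one ω) (hψ.le_one ω), rfl⟩
  have he : e ≤ a + b := by
    rw [← hφ.integral_eq, ← hψ.integral_eq, ← integral_add hφ.integrable hψ.integrable]
    exact integral_mono hm.integrable (hφ.integrable.add hψ.integrable) fun ω =>
      max_le (le_add_of_nonneg_right (hψ.nonneg ω)) (le_add_of_nonneg_left (hφ.nonneg ω))
  have he1 : e ≤ 1 := hm.mass_le_one
  -- raise `m` towards `1` by the fraction `c` of its defect, so as to reach mass `a + b`
  set c := (a + b - e) / (1 - e)
  have hc0 : 0 ≤ c := div_nonneg (by linarith) (by linarith)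
  have hc1 : c ≤ 1 := div_le_one_of_le₀ (by linarith) (by linarith)
  have hce : e + c * (1 - e) = a + b := by
    rcases he1.lt_or_eq with he1 | he1
    · rw [div_mul_cancel₀ _ (sub_ne_zero.2 he1.ne')]; ring
    · rw [he1, sub_self, mul_zero]; linarith
  have hχ : IsRandomizedEvent μ (fun ω => c * (1 - m ω)) (c * (1 - e)) :=
    { aemeasurable := (aemeasurable_const.sub hm.aemeasurable).const_mul c
      nonneg := fun ω => mul_nonneg hc0 (sub_nonneg.2 (hm.le_one ω))
      le_one := fun ω =>
        mul_le_one₀ hc1 (sub_nonneg.2 (hm.le_one ω)) (by linarith [hm.nonneg ω])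
      integral_eq := by rw [integral_const_mul, hm.one_sub.integral_eq] }
  refine ⟨fun ω => m ω + c * (1 - m ω), ⟨hm.aemeasurable.add hχ.aemeasurable,
    fun ω => add_nonneg (hm.nonneg ω) (hχ.nonneg ω), fun ω => ?_, ?_⟩,
    fun ω => (le_max_left _ _).trans (le_add_of_nonneg_right (hχ.nonneg ω)),
    fun ω => (le_max_right _ _).trans (le_add_of_nonneg_right (hχ.nonneg ω))⟩
  · nlinarith [hm.le_one ω]
  · rw [integral_add hm.integrable hχ.integrable, hm.integral_eq, hχ.integral_eq, hce]

end IsRandomizedEvent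

noncomputable def lowerTailWeight (t c : ℝ) : ℝ → ℝ :=
  (Iio t).indicator (fun _ => 1) + ({t} : Set ℝ).indicator (fun _ => c)

section LowerTailWeight

variable {t c x : ℝ}

lemma lowerTailWeight_of_lt (hx : x < t) : lowerTailWeight t c x = 1 := by
  simp [lowerTailWeight, hx, hx.ne]

lemma lowerTailWeight_self : lowerTailWeight t c t = c := by
  simp [lowerTailWeight]

lemma lowerTailWeight_of_gt (hx : t < x) : lowerTailWeight t c x = 0 := by
  simp [lowerTailWeight, hx.le, hx.ne']

lemma mul_lowerTailWeight :
    x * lowerTailWeight t c x = t * lowerTailWeight t c x - max (t - x) 0 := by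
  rcases lt_trichotomy x t with hx | rfl | hx
  · rw [lowerTailWeight_of_lt hx, max_eq_left (sub_nonneg.2 hx.le)]; ring
  · simp
  · rw [lowerTailWeight_of_gt hx, max_eq_right (sub_nonpos.2 hx.le)]; ring

lemma isRandomizedEvent_lowerTailWeight {ν : Measure ℝ} [IsFiniteMeasure ν] (hc0 : 0 ≤ c)
    (hc1 : c ≤ 1) :
    IsRandomizedEvent ν (lowerTailWeight t c) (ν.real (Iio t) + c * ν.real {t}) where
  aemeasurable := ((measurable_const.indicator measurableSet_Iio).add
    (measurable_const.indicator (measurableSet_singleton t))).aemeasurable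
  nonneg x := by
    rcases lt_trichotomy x t with hx | rfl | hx
    · simp [lowerTailWeight_of_lt hx]
    · rwa [lowerTailWeight_self]
    · simp [lowerTailWeight_of_gt hx]
  le_one x := by
    rcases lt_trichotomy x t with hx | rfl | hx
    · simp [lowerTailWeight_of_lt hx]
    · rwa [lowerTailWeight_self]
    · simp [lowerTailWeight_of_gt hx]
  integral_eq := by
    rw [lowerTailWeight, integral_add' ((integrable_const 1).indicator measurableSet_Iio)
      ((integrable_const c).indicator (measurableSet_singleton t)),
      integral_indicator_const _ measurableSet_Iio,
      integral_indicator_const _ (measurableSet_singleton t), smul_eq_mul, smul_eq_mul, mul_one,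
      mul_comm]

end LowerTailWeight

lemma exists_isRandomizedEvent_integral_mul_eq_setIntegral_quantile {ν : Measure ℝ}
    [IsProbabilityMeasure ν] (h : Integrable id ν) {α : ℝ} (hα : α ∈ Ioo 0 1) :
    ∃ g, IsRandomizedEvent ν g α ∧ ∫ x, x * g x ∂ν = ∫ u in Ioo 0 α, quantile ν u := by
  set t := quantile ν α
  have hp : ν.real (Iio t) ≤ α := measureReal_Iio_quantile_le hα
  have hpr : α ≤ ν.real (Iio t) + ν.real {t} := by
    rw [← measureReal_union (s₁ := Iio t) (disjoint_singleton_right.2 (lt_irrefl t))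
      (measurableSet_singleton t), Iio_union_right, ← cdf_eq_real]
    exact le_cdf_quantile hα
  -- if the atom `{t}` is null, then `ν.real (Iio t) = α` and the junk value `c = 0` is harmless
  set c := (α - ν.real (Iio t)) / ν.real {t}
  have hc : ν.real (Iio t) + c * ν.real {t} = α := by
    rcases (measureReal_nonneg : 0 ≤ ν.real {t}).lt_or_eq with hr | hr
    · rw [div_mul_cancel₀ _ hr.ne']; ring
    · rw [← hr] at hpr ⊢; linarith
  have hg := isRandomizedEvent_lowerTailWeight (ν := ν) (t := t)
    (div_nonneg (sub_nonneg.2 hp) measureReal_nonneg)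
    (div_le_one_of_le₀ (by linarith) measureReal_nonneg)
  rw [hc] at hg
  have hpos : Integrable (fun x => max (t - x) 0) ν := ((integrable_const t).sub h).pos_part
  refine ⟨_, hg, ?_⟩
  rw [setIntegral_Ioo_quantile h hα, integral_congr_ae (ae_of_all _ fun x => mul_lowerTailWeight),
    integral_sub (hg.integrable.const_mul t) hpos, integral_const_mul, hg.integral_eq, mul_comm]

section LeftQuantile

variable {Ω : Type*} [MeasurableSpace Ω] {μ : Measure Ω} {X ψ : Ω → ℝ} {β : ℝ}

lemma integrable_id_map (hX : Integrable X μ) : Integrable id (μ.map X) :=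
  (integrable_map_measure aestronglyMeasurable_id hX.aemeasurable).2 hX

variable [IsProbabilityMeasure μ]

lemma leftQuantile_eq_quantile_map (hX : AEMeasurable X μ) :
    leftQuantile μ X = quantile (μ.map X) := by
  have := Measure.isProbabilityMeasure_map hX
  ext u
  simp only [leftQuantile, quantile, cdf_eq_real, measureReal_def,
    Measure.map_apply_of_aemeasurable hX measurableSet_Iic]
  rfl

lemma integrableOn_leftQuantile (hX : Integrable X μ) :
    IntegrableOn (leftQuantile μ X) (Icc 0 1) := by
  have := Measure.isProbabilityMeasure_map hX.aemeasurable
  rw [leftQuantile_eq_quantile_map hX.aemeasurable, integrableOn_Icc_iff_integrableOn_Ioo]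
  exact integrableOn_quantile (integrable_id_map hX)

lemma setIntegral_Icc_zero_one_leftQuantile (hX : Integrable X μ) :
    ∫ u in Icc 0 1, leftQuantile μ X u = ∫ ω, X ω ∂μ := by
  have := Measure.isProbabilityMeasure_map hX.aemeasurable
  rw [leftQuantile_eq_quantile_map hX.aemeasurable, integral_Icc_eq_integral_Ioo]
  exact (integral_comp_quantile aestronglyMeasurable_id).trans
    (integral_map hX.aemeasurable aestronglyMeasurable_id)

lemma setIntegral_Icc_leftQuantile (hX : Integrable X μ) (hβ : β ∈ Ioo 0 1) :
    ∫ u in Icc 0 β, leftQuantile μ X u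
      = β * leftQuantile μ X β - ∫ ω, max (leftQuantile μ X β - X ω) 0 ∂μ := by
  have := Measure.isProbabilityMeasure_map hX.aemeasurable
  rw [leftQuantile_eq_quantile_map hX.aemeasurable, integral_Icc_eq_integral_Ioo,
    setIntegral_Ioo_quantile (integrable_id_map hX) hβ,
    integral_map hX.aemeasurable (by fun_prop)]

lemma setIntegral_leftQuantile_le_integral_mul (hX : Integrable X μ)
    (hψ : IsRandomizedEvent μ ψ β) (hβ : 0 < β) :
    ∫ u in Icc 0 β, leftQuantile μ X u ≤ ∫ ω, X ω * ψ ω ∂μ := by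
  rcases hψ.mass_le_one.lt_or_eq with hβ1 | rfl
  · set t := leftQuantile μ X β
    have hpos : Integrable (fun ω => max (t - X ω) 0) μ :=
      ((integrable_const t).sub hX).pos_part
    calc ∫ u in Icc 0 β, leftQuantile μ X u = ∫ ω, (t * ψ ω - max (t - X ω) 0) ∂μ := by
          rw [setIntegral_Icc_leftQuantile hX ⟨hβ, hβ1⟩,
            integral_sub (hψ.integrable.const_mul t) hpos, integral_const_mul, hψ.integral_eq,
            mul_comm]
      _ ≤ ∫ ω, X ω * ψ ω ∂μ :=
          integral_mono ((hψ.integrable.const_mul t).sub hpos) (hψ.integrable_mul hX)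
            fun ω => mul_sub_max_le_mul (hψ.nonneg ω) (hψ.le_one ω)
  · rw [setIntegral_Icc_zero_one_leftQuantile hX]
    exact (integral_congr_ae (hψ.ae_eq_one.mono fun ω h => by simp [h])).le

lemma integral_mul_le_setIntegral_leftQuantile (hX : Integrable X μ)
    (hψ : IsRandomizedEvent μ ψ β) (hβ : β < 1) :
    ∫ ω, X ω * ψ ω ∂μ ≤ ∫ u in Icc (1 - β) 1, leftQuantile μ X u := by
  have hlow := setIntegral_leftQuantile_le_integral_mul hX hψ.one_sub (sub_pos.2 hβ)
  have hsplit : ∫ ω, X ω ∂μ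
      = (∫ u in Icc 0 (1 - β), leftQuantile μ X u) + ∫ u in Icc (1 - β) 1, leftQuantile μ X u := by
    have hunion : Icc 0 (1 - β) ∪ Icc (1 - β) 1 = Icc (0 : ℝ) 1 :=
      Icc_union_Icc_eq_Icc (sub_nonneg.2 hψ.mass_le_one) (sub_le_self _ hψ.mass_nonneg)
    rw [← setIntegral_Icc_zero_one_leftQuantile hX, ← hunion,
      setIntegral_Icc_union_Icc le_rfl (hunion ▸ integrableOn_leftQuantile hX)]
  have hcompl : ∫ ω, X ω * (1 - ψ ω) ∂μ = ∫ ω, X ω ∂μ - ∫ ω, X ω * ψ ω ∂μ := by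
    rw [← integral_sub hX (hψ.integrable_mul hX)]
    simp_rw [mul_one_sub]
  linarith

lemma exists_isRandomizedEvent_integral_mul_eq_setIntegral_leftQuantile (hX : Integrable X μ)
    (hβ : β ∈ Ioo 0 1) :
    ∃ φ, IsRandomizedEvent μ φ β ∧ ∫ ω, X ω * φ ω ∂μ = ∫ u in Icc 0 β, leftQuantile μ X u := by
  have := Measure.isProbabilityMeasure_map hX.aemeasurable
  obtain ⟨g, hg, hXg⟩ :=
    exists_isRandomizedEvent_integral_mul_eq_setIntegral_quantile (integrable_id_map hX) hβ
  refine ⟨fun ω => g (X ω), hg.comp hX.aemeasurable, ?_⟩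
  rw [leftQuantile_eq_quantile_map hX.aemeasurable, integral_Icc_eq_integral_Ioo, ← hXg]
  exact (integral_map (f := fun x => x * g x) hX.aemeasurable
    (aemeasurable_id.mul hg.aemeasurable).aestronglyMeasurable).symm

end LeftQuantile

lemma avgQuantile_Icc_zero {Ω : Type*} [MeasurableSpace Ω] {μ : Measure Ω} {X : Ω → ℝ} {a : ℝ}
    (ha : 0 ≤ a) :
    avgQuantile μ X (Icc 0 a) = a⁻¹ * ∫ u in Icc 0 a, leftQuantile μ X u := by
  rw [avgQuantile, ← measureReal_def, Real.volume_real_Icc_of_le ha, sub_zero]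

section SumBound

variable {Ω : Type*} [MeasurableSpace Ω] {μ : Measure Ω} [IsProbabilityMeasure μ]
  {X X₁ X₂ : Ω → ℝ}

lemma setIntegral_leftQuantile_add_le (hX₁ : Integrable X₁ μ) (hX₂ : Integrable X₂ μ)
    {α₁ α₂ : ℝ} (hα₁ : α₁ ∈ Ioo 0 1) (hα₂ : α₂ ∈ Ioo 0 1) (hα : α₁ + α₂ ≤ 1) :
    ∫ u in Icc 0 (α₁ + α₂), leftQuantile μ (fun ω => X₁ ω + X₂ ω) u ≤
      ((∫ u in Icc 0 α₁, leftQuantile μ X₁ u) + ∫ u in Icc (1 - α₂) 1, leftQuantile μ X₁ u) +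
      ((∫ u in Icc 0 α₂, leftQuantile μ X₂ u) + ∫ u in Icc (1 - α₁) 1, leftQuantile μ X₂ u) := by
  obtain ⟨φ₁, hφ₁, hXφ₁⟩ :=
    exists_isRandomizedEvent_integral_mul_eq_setIntegral_leftQuantile hX₁ hα₁
  obtain ⟨φ₂, hφ₂, hXφ₂⟩ :=
    exists_isRandomizedEvent_integral_mul_eq_setIntegral_leftQuantile hX₂ hα₂
  obtain ⟨φ, hφ, hφ₁φ, hφ₂φ⟩ := hφ₁.exists_ge_ge hφ₂ hα
  have hψ₁ : IsRandomizedEvent μ (fun ω => φ ω - φ₁ ω) α₂ :=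
    add_sub_cancel_left α₁ α₂ ▸ hφ.sub hφ₁ hφ₁φ
  have hψ₂ : IsRandomizedEvent μ (fun ω => φ ω - φ₂ ω) α₁ :=
    add_sub_cancel_right α₁ α₂ ▸ hφ.sub hφ₂ hφ₂φ
  have hsplit : ∀ {Y ψ : Ω → ℝ} {b : ℝ}, Integrable Y μ → IsRandomizedEvent μ ψ b →
      ∫ ω, Y ω * φ ω ∂μ = ∫ ω, Y ω * ψ ω ∂μ + ∫ ω, Y ω * (φ ω - ψ ω) ∂μ := by
    intro Y ψ b hY hψ
    simp_rw [mul_sub]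
    rw [integral_sub (hφ.integrable_mul hY) (hψ.integrable_mul hY)]
    ring
  have hsum : ∫ ω, (X₁ ω + X₂ ω) * φ ω ∂μ = ∫ ω, X₁ ω * φ ω ∂μ + ∫ ω, X₂ ω * φ ω ∂μ := by
    simp_rw [add_mul]
    exact integral_add (hφ.integrable_mul hX₁) (hφ.integrable_mul hX₂)
  have hX : Integrable (fun ω => X₁ ω + X₂ ω) μ := hX₁.add hX₂
  have hlow := setIntegral_leftQuantile_le_integral_mul hX hφ (by linarith [hα₁.1, hα₂.1])
  have hup₁ := integral_mul_le_setIntegral_leftQuantile hX₁ hψ₁ hα₂.2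
  have hup₂ := integral_mul_le_setIntegral_leftQuantile hX₂ hψ₂ hα₁.2
  linarith [hsplit hX₁ hφ₁, hsplit hX₂ hφ₂]

lemma avgQuantile_Icc_union_Icc (hX : Integrable X μ) {a b : ℝ} (ha : 0 ≤ a) (hb : 0 ≤ b)
    (hab : a + b ≤ 1) :
    avgQuantile μ X (Icc 0 a ∪ Icc (1 - b) 1) = (a + b)⁻¹ *
      ((∫ u in Icc 0 a, leftQuantile μ X u) + ∫ u in Icc (1 - b) 1, leftQuantile μ X u) := by
  have hsub : Icc 0 a ∪ Icc (1 - b) 1 ⊆ Icc 0 1 :=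
    union_subset (Icc_subset_Icc le_rfl (by linarith)) (Icc_subset_Icc (by linarith) le_rfl)
  have ha1 : a ≤ 1 - b := by linarith
  rw [avgQuantile, ← measureReal_def, measureReal_union₀ measurableSet_Icc.nullMeasurableSet
    (aedisjoint_Icc_Icc ha1) measure_Icc_lt_top.ne measure_Icc_lt_top.ne,
    Real.volume_real_Icc_of_le ha,
    Real.volume_real_Icc_of_le (sub_le_self 1 hb),
    setIntegral_Icc_union_Icc ha1 ((integrableOn_leftQuantile hX).mono_set hsub)]
  ring_nf

end SumBound

theorem stmt6_general {Ω : Type*} [MeasurableSpace Ω] (μ : Measure Ω) [IsProbabilityMeasure μ]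
    (X₁ X₂ : Ω → ℝ) (hX₁ : Integrable X₁ μ) (hX₂ : Integrable X₂ μ)
    (s α₁ α₂ : ℝ) (hs1 : s ≤ 1)
    (hα₁ : α₁ ∈ Set.Ioo (0 : ℝ) 1) (hα₂ : α₂ ∈ Set.Ioo (0 : ℝ) 1)
    (hsum : α₁ + α₂ = s) :
    avgQuantile μ (fun ω => X₁ ω + X₂ ω) (Set.Icc 0 s)
      ≤ avgQuantile μ X₁ (Set.Icc 0 α₁ ∪ Set.Icc (1 - s + α₁) 1)
        + avgQuantile μ X₂ (Set.Icc 0 α₂ ∪ Set.Icc (1 - s + α₂) 1) := by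
  subst hsum
  have hs : 0 ≤ α₁ + α₂ := by linarith [hα₁.1, hα₂.1]
  rw [show 1 - (α₁ + α₂) + α₁ = 1 - α₂ by ring, show 1 - (α₁ + α₂) + α₂ = 1 - α₁ by ring,
    avgQuantile_Icc_zero hs, avgQuantile_Icc_union_Icc hX₁ hα₁.1.le hα₂.1.le hs1,
    avgQuantile_Icc_union_Icc hX₂ hα₂.1.le hα₁.1.le (by linarith), add_comm α₂ α₁, ← mul_add]
  exact mul_le_mul_of_nonneg_left (setIntegral_leftQuantile_add_le hX₁ hX₂ hα₁ hα₂ hs1)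
    (inv_nonneg.2 hs)

theorem stmt6 {Ω : Type*} [MeasurableSpace Ω] (μ : Measure Ω) [IsProbabilityMeasure μ]
    (X₁ X₂ : Ω → ℝ) (hX₁ : Integrable X₁ μ) (hX₂ : Integrable X₂ μ)
    (s α₁ α₂ : ℝ) (hs : 0 < s) (hs1 : s ≤ 1)
    (hα₁ : α₁ ∈ Set.Ioo (0 : ℝ) 1) (hα₂ : α₂ ∈ Set.Ioo (0 : ℝ) 1)
    (hsum : α₁ + α₂ = s) :
    avgQuantile μ (fun ω => X₁ ω + X₂ ω) (Set.Icc 0 s)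
      ≤ avgQuantile μ X₁ (Set.Icc 0 α₁ ∪ Set.Icc (1 - s + α₁) 1)
        + avgQuantile μ X₂ (Set.Icc 0 α₂ ∪ Set.Icc (1 - s + α₂) 1) :=
  stmt6_general μ X₁ X₂ hX₁ hX₂ s α₁ α₂ hs1 hα₁ hα₂ hsum
end

section
/- Let X₁, X₂ be random variables, S = X₁ + X₂, and 0 < r < r+s ≤ 1. Suppose there exist uniform transforms U_{X₁}, U_{X₂}, U_S (each ~ Uniform[0,1], with q_{U_Y}^-(Y) = Y a.s. for the respective Y) and β₁, β₂ > 0 with β₁ + β₂ = β ∈ (0,1) such that {U_S ≤ β} = {U_{X₁} ∈ [0,β₁] ∪ [1-β+β₁, 1]} = {U_{X₂} ∈ [0,β₂] ∪ [1-β+β₂, 1]} (as events up to null sets). Then R_{[0,β]}(S) = R_{[0,β₁]∪[1-β+β₁,1]}(X₁) + R_{[0,β₂]∪[1-β+β₂,1]}(X₂). -/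
/-!
If `U` is a uniform transform of `X`, the substitution `u = U ω` turns `∫_I q_u(X) du` into
`E[X; U ∈ I]`. The three events `{U_S ≤ β}`, `{U_{X₁} ∈ I₁}`, `{U_{X₂} ∈ I₂}` agree almost surely
and all three index sets have length `β`, so every average equals `β⁻¹ E[·; U_S ≤ β]`, and the
identity is additivity of the expectation for `S = X₁ + X₂`.
-/

open MeasureTheory Set Filter

open ProbabilityTheory Topology

lemma monotoneOn_sInf_setOf_le {F : ℝ → ℝ} (hF : Monotone F)
    (hbot : Tendsto F atBot (𝓝 0)) (htop : Tendsto F atTop (𝓝 1)) :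
    MonotoneOn (fun u => sInf {x | u ≤ F x}) (Ioo 0 1) := by
  intro u hu v hv huv
  obtain ⟨x₀, hx₀⟩ := (hbot.eventually (eventually_lt_nhds hu.1)).exists
  obtain ⟨x₁, hx₁⟩ := (htop.eventually (eventually_ge_nhds hv.2)).exists
  have hbdd : BddBelow {x | u ≤ F x} :=
    ⟨x₀, fun y hy => le_of_not_ge fun hyx => (hy.trans (hF hyx)).not_gt hx₀⟩
  exact csInf_le_csInf hbdd ⟨x₁, hx₁⟩ fun x hx => huv.trans hx

section

variable {Ω : Type*} [MeasurableSpace Ω] {μ : Measure Ω}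

lemma leftQuantile_eq_sInf_cdf [IsProbabilityMeasure μ] {X : Ω → ℝ} (hX : AEMeasurable X μ) :
    leftQuantile μ X = fun u => sInf {x | u ≤ cdf (μ.map X) x} := by
  have := Measure.isProbabilityMeasure_map hX
  have hcdf (x : ℝ) : cdf (μ.map X) x = (μ {ω | X ω ≤ x}).toReal := by
    rw [cdf_eq_real, measureReal_def, Measure.map_apply_of_aemeasurable hX measurableSet_Iic]
    rfl
  simp only [hcdf]
  rfl

lemma monotoneOn_leftQuantile [IsProbabilityMeasure μ] {X : Ω → ℝ} (hX : AEMeasurable X μ) :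
    MonotoneOn (leftQuantile μ X) (Ioo 0 1) := by
  rw [leftQuantile_eq_sInf_cdf hX]
  exact monotoneOn_sInf_setOf_le (monotone_cdf _) (tendsto_cdf_atBot _) (tendsto_cdf_atTop _)

lemma aemeasurable_of_map_eq_restrict_Icc {U : Ω → ℝ}
    (hU : μ.map U = volume.restrict (Icc 0 1)) : AEMeasurable U μ :=
  AEMeasurable.of_map_ne_zero (by simp [hU])

lemma ae_mem_Icc_of_map_eq_restrict_Icc {U : Ω → ℝ}
    (hU : μ.map U = volume.restrict (Icc 0 1)) : ∀ᵐ ω ∂μ, U ω ∈ Icc (0 : ℝ) 1 := by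
  refine ae_of_ae_map (aemeasurable_of_map_eq_restrict_Icc hU) ?_
  rw [hU]
  exact ae_restrict_mem measurableSet_Icc

lemma setIntegral_leftQuantile_eq [IsProbabilityMeasure μ] {X U : Ω → ℝ}
    (hX : AEMeasurable X μ) (hU : μ.map U = volume.restrict (Icc 0 1))
    (hXU : ∀ᵐ ω ∂μ, leftQuantile μ X (U ω) = X ω)
    {I : Set ℝ} (hI : MeasurableSet I) (hI01 : I ⊆ Icc 0 1) :
    ∫ u in I, leftQuantile μ X u = ∫ ω in U ⁻¹' I, X ω ∂μ := by
  have hq : AEMeasurable (leftQuantile μ X) (μ.map U) := by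
    rw [hU, ← Measure.restrict_congr_set Ioo_ae_eq_Icc]
    exact aemeasurable_restrict_of_monotoneOn measurableSet_Ioo (monotoneOn_leftQuantile hX)
  calc ∫ u in I, leftQuantile μ X u
      = ∫ u in I, leftQuantile μ X u ∂(μ.map U) := by
        rw [hU, Measure.restrict_restrict hI, inter_eq_self_of_subset_left hI01]
    _ = ∫ ω in U ⁻¹' I, leftQuantile μ X (U ω) ∂μ :=
        setIntegral_map hI hq.aestronglyMeasurable (aemeasurable_of_map_eq_restrict_Icc hU)
    _ = ∫ ω in U ⁻¹' I, X ω ∂μ := integral_congr_ae (ae_restrict_of_ae hXU)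

lemma avgQuantile_eq_of_map_eq_restrict_Icc [IsProbabilityMeasure μ] {X U : Ω → ℝ}
    (hX : AEMeasurable X μ) (hU : μ.map U = volume.restrict (Icc 0 1))
    (hXU : ∀ᵐ ω ∂μ, leftQuantile μ X (U ω) = X ω)
    {I : Set ℝ} (hI : MeasurableSet I) (hI01 : I ⊆ Icc 0 1) :
    avgQuantile μ X I = (volume I).toReal⁻¹ * ∫ ω in U ⁻¹' I, X ω ∂μ := by
  rw [avgQuantile, setIntegral_leftQuantile_eq hX hU hXU hI hI01]

lemma avgQuantile_Icc_zero_eq_of_map_eq_restrict_Icc [IsProbabilityMeasure μ] {X U : Ω → ℝ}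
    (hX : AEMeasurable X μ) (hU : μ.map U = volume.restrict (Icc 0 1))
    (hXU : ∀ᵐ ω ∂μ, leftQuantile μ X (U ω) = X ω) {B : ℝ} (hB0 : 0 ≤ B) (hB1 : B ≤ 1) :
    avgQuantile μ X (Icc 0 B) = B⁻¹ * ∫ ω in {ω | U ω ≤ B}, X ω ∂μ := by
  have hUB : U ⁻¹' Icc 0 B =ᵐ[μ] {ω | U ω ≤ B} := by
    filter_upwards [ae_mem_Icc_of_map_eq_restrict_Icc hU] with ω hω
    exact propext ⟨fun h => h.2, fun h => ⟨hω.1, h⟩⟩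
  rw [avgQuantile_eq_of_map_eq_restrict_Icc hX hU hXU measurableSet_Icc
      (Icc_subset_Icc le_rfl hB1), setIntegral_congr_set hUB, Real.volume_Icc, sub_zero,
    ENNReal.toReal_ofReal hB0]

lemma volume_Icc_union_Icc {b B : ℝ} (hb : 0 ≤ b) (hbB : b ≤ B) (hB : B < 1) :
    volume (Icc 0 b ∪ Icc (1 - B + b) 1) = ENNReal.ofReal B := by
  have hdisj : Disjoint (Icc 0 b) (Icc (1 - B + b) 1) :=
    disjoint_left.2 fun x hx hx' => by linarith [hx.2, hx'.1]
  rw [measure_union hdisj measurableSet_Icc, Real.volume_Icc, Real.volume_Icc,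
    ← ENNReal.ofReal_add (by linarith) (by linarith)]
  congr 1
  ring

lemma avgQuantile_Icc_union_Icc_eq_of_map_eq_restrict_Icc [IsProbabilityMeasure μ]
    {X U : Ω → ℝ} (hX : AEMeasurable X μ) (hU : μ.map U = volume.restrict (Icc 0 1))
    (hXU : ∀ᵐ ω ∂μ, leftQuantile μ X (U ω) = X ω)
    {b B : ℝ} (hb : 0 ≤ b) (hbB : b ≤ B) (hB : B < 1) :
    avgQuantile μ X (Icc 0 b ∪ Icc (1 - B + b) 1)
      = B⁻¹ * ∫ ω in {ω | U ω ∈ Icc 0 b ∪ Icc (1 - B + b) 1}, X ω ∂μ := by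
  have hI01 : Icc 0 b ∪ Icc (1 - B + b) 1 ⊆ Icc 0 1 :=
    union_subset (Icc_subset_Icc le_rfl (by linarith)) (Icc_subset_Icc (by linarith) le_rfl)
  rw [avgQuantile_eq_of_map_eq_restrict_Icc hX hU hXU
      (measurableSet_Icc.union measurableSet_Icc) hI01,
    volume_Icc_union_Icc hb hbB hB, ENNReal.toReal_ofReal (hb.trans hbB)]
  rfl

end

theorem stmt14_general {Ω : Type*} [MeasurableSpace Ω] (μ : Measure Ω) [IsProbabilityMeasure μ]
    (X₁ X₂ : Ω → ℝ) (hX₁ : Integrable X₁ μ) (hX₂ : Integrable X₂ μ)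
    (β₁ β₂ B : ℝ) (hβ₁ : 0 < β₁) (hβ₂ : 0 < β₂) (hBdef : B = β₁ + β₂)
    (hB : B ∈ Set.Ioo (0 : ℝ) 1)
    (U₁ U₂ US : Ω → ℝ)
    (hU₁law : Measure.map U₁ μ = volume.restrict (Set.Icc (0 : ℝ) 1))
    (hU₂law : Measure.map U₂ μ = volume.restrict (Set.Icc (0 : ℝ) 1))
    (hUSlaw : Measure.map US μ = volume.restrict (Set.Icc (0 : ℝ) 1))
    (hU₁X : ∀ᵐ ω ∂μ, leftQuantile μ X₁ (U₁ ω) = X₁ ω)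
    (hU₂X : ∀ᵐ ω ∂μ, leftQuantile μ X₂ (U₂ ω) = X₂ ω)
    (hUSX : ∀ᵐ ω ∂μ, leftQuantile μ (fun ω' => X₁ ω' + X₂ ω') (US ω) = X₁ ω + X₂ ω)
    (hE₁ : μ (({ω | US ω ≤ B} \ {ω | U₁ ω ∈ Set.Icc 0 β₁ ∪ Set.Icc (1 - B + β₁) 1})
        ∪ ({ω | U₁ ω ∈ Set.Icc 0 β₁ ∪ Set.Icc (1 - B + β₁) 1} \ {ω | US ω ≤ B})) = 0)
    (hE₂ : μ (({ω | US ω ≤ B} \ {ω | U₂ ω ∈ Set.Icc 0 β₂ ∪ Set.Icc (1 - B + β₂) 1})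
        ∪ ({ω | U₂ ω ∈ Set.Icc 0 β₂ ∪ Set.Icc (1 - B + β₂) 1} \ {ω | US ω ≤ B})) = 0) :
    avgQuantile μ (fun ω => X₁ ω + X₂ ω) (Set.Icc 0 B)
      = avgQuantile μ X₁ (Set.Icc 0 β₁ ∪ Set.Icc (1 - B + β₁) 1)
        + avgQuantile μ X₂ (Set.Icc 0 β₂ ∪ Set.Icc (1 - B + β₂) 1) := by
  obtain ⟨hB0, hB1⟩ := hB
  have hA₁ : {ω | US ω ≤ B} =ᵐ[μ] {ω | U₁ ω ∈ Icc 0 β₁ ∪ Icc (1 - B + β₁) 1} :=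
    measure_symmDiff_eq_zero_iff.mp hE₁
  have hA₂ : {ω | US ω ≤ B} =ᵐ[μ] {ω | U₂ ω ∈ Icc 0 β₂ ∪ Icc (1 - B + β₂) 1} :=
    measure_symmDiff_eq_zero_iff.mp hE₂
  rw [avgQuantile_Icc_zero_eq_of_map_eq_restrict_Icc (X := fun ω => X₁ ω + X₂ ω)
      (hX₁.add hX₂).aemeasurable hUSlaw hUSX hB0.le hB1.le,
    avgQuantile_Icc_union_Icc_eq_of_map_eq_restrict_Icc hX₁.aemeasurable hU₁law hU₁X
      hβ₁.le (by linarith) hB1,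
    avgQuantile_Icc_union_Icc_eq_of_map_eq_restrict_Icc hX₂.aemeasurable hU₂law hU₂X
      hβ₂.le (by linarith) hB1,
    ← setIntegral_congr_set hA₁, ← setIntegral_congr_set hA₂,
    integral_add hX₁.restrict hX₂.restrict, mul_add]

theorem stmt14 {Ω : Type*} [MeasurableSpace Ω] (μ : Measure Ω) [IsProbabilityMeasure μ]
    (X₁ X₂ : Ω → ℝ) (hX₁ : Integrable X₁ μ) (hX₂ : Integrable X₂ μ)
    (r s : ℝ) (hr : 0 < r) (hs : 0 < s) (hrs : r + s ≤ 1)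
    (β₁ β₂ B : ℝ) (hβ₁ : 0 < β₁) (hβ₂ : 0 < β₂) (hBdef : B = β₁ + β₂)
    (hB : B ∈ Set.Ioo (0 : ℝ) 1)
    (U₁ U₂ US : Ω → ℝ)
    (hU₁law : Measure.map U₁ μ = volume.restrict (Set.Icc (0 : ℝ) 1))
    (hU₂law : Measure.map U₂ μ = volume.restrict (Set.Icc (0 : ℝ) 1))
    (hUSlaw : Measure.map US μ = volume.restrict (Set.Icc (0 : ℝ) 1))
    (hU₁X : ∀ᵐ ω ∂μ, leftQuantile μ X₁ (U₁ ω) = X₁ ω)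
    (hU₂X : ∀ᵐ ω ∂μ, leftQuantile μ X₂ (U₂ ω) = X₂ ω)
    (hUSX : ∀ᵐ ω ∂μ, leftQuantile μ (fun ω' => X₁ ω' + X₂ ω') (US ω) = X₁ ω + X₂ ω)
    (hE₁ : μ (({ω | US ω ≤ B} \ {ω | U₁ ω ∈ Set.Icc 0 β₁ ∪ Set.Icc (1 - B + β₁) 1})
        ∪ ({ω | U₁ ω ∈ Set.Icc 0 β₁ ∪ Set.Icc (1 - B + β₁) 1} \ {ω | US ω ≤ B})) = 0)
    (hE₂ : μ (({ω | US ω ≤ B} \ {ω | U₂ ω ∈ Set.Icc 0 β₂ ∪ Set.Icc (1 - B + β₂) 1})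
        ∪ ({ω | U₂ ω ∈ Set.Icc 0 β₂ ∪ Set.Icc (1 - B + β₂) 1} \ {ω | US ω ≤ B})) = 0) :
    avgQuantile μ (fun ω => X₁ ω + X₂ ω) (Set.Icc 0 B)
      = avgQuantile μ X₁ (Set.Icc 0 β₁ ∪ Set.Icc (1 - B + β₁) 1)
        + avgQuantile μ X₂ (Set.Icc 0 β₂ ∪ Set.Icc (1 - B + β₂) 1) :=
  stmt14_general μ X₁ X₂ hX₁ hX₂ β₁ β₂ B hβ₁ hβ₂ hBdef hB U₁ U₂ US hU₁law hU₂law hUSlaw hU₁X hU₂X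
    hUSX hE₁ hE₂
end
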